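/- arXiv:1709.03451 — 7 statements merged into one kernel-verified Lean document; each statement's English description precedes it below -/
import Mathlib

section
/- Let P ⊂ ℝ² be a lattice polygon with e_□(P) = l. Suppose Δ_P(x+y) ≥ l and Δ_P(x−y) ≥ l. Then for every primitive vector (a,b) ∈ ℤ² with a ≠ 0 and b ≠ 0, the lattice width w_{(a,b)}(P) = Δ_P(ax+by) is at least l. -/
/-- The lattice polygon determined by a nonempty finite set `V` of lattice points:
the convex hull in `ℝ²` of the corresponding real points. -/
def latticePoly2 (V : Finset (Fin 2 → ℤ)) : Set (Fin 2 → ℝ) :=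
  convexHull ℝ ((fun v : Fin 2 → ℤ => fun i => (v i : ℝ)) '' (V : Set (Fin 2 → ℤ)))

/-- `Δ_P(a₀·x + a₁·y) = w_a(P)`, the lattice width of `P ⊆ ℝ²` in the direction `a ∈ ℤ²`:
the sup minus the inf of the linear form `p ↦ a·p` over `P`. -/
noncomputable def width2 (P : Set (Fin 2 → ℝ)) (a : Fin 2 → ℤ) : ℝ :=
  sSup ((fun p => ∑ i, (a i : ℝ) * p i) '' P) - sInf ((fun p => ∑ i, (a i : ℝ) * p i) '' P)

/-- `T(P) ⊆ [0,l]²` for some affine unimodular transformation `T : p ↦ A·p + v`. -/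
def FitsInSquare (P : Set (Fin 2 → ℝ)) (l : ℤ) : Prop :=
  ∃ (A : Matrix (Fin 2) (Fin 2) ℤ) (v : Fin 2 → ℤ),
    (A.det = 1 ∨ A.det = -1) ∧
    ∀ p ∈ P, ∀ i, ((A.map (fun z : ℤ => (z : ℝ))).mulVec p + fun j => (v j : ℝ)) i ∈
      Set.Icc (0 : ℝ) (l : ℝ)

/-- The set of lattice widths of `P` in all primitive directions `a ∈ ℤ²`. -/
def widthSet2 (P : Set (Fin 2 → ℝ)) : Set ℝ :=
  {w | ∃ a : Fin 2 → ℤ, Int.gcd (a 0) (a 1) = 1 ∧ width2 P a = w}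

/-- `T(P) ⊆ [0,a] × [0,b]` for some affine unimodular transformation `T : p ↦ A·p + v`. -/
def FitsInRect (P : Set (Fin 2 → ℝ)) (a b : ℤ) : Prop :=
  ∃ (A : Matrix (Fin 2) (Fin 2) ℤ) (v : Fin 2 → ℤ),
    (A.det = 1 ∨ A.det = -1) ∧
    ∀ p ∈ P, ((A.map (fun z : ℤ => (z : ℝ))).mulVec p + fun j => (v j : ℝ)) 0 ∈
        Set.Icc (0 : ℝ) (a : ℝ) ∧
      ((A.map (fun z : ℤ => (z : ℝ))).mulVec p + fun j => (v j : ℝ)) 1 ∈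
        Set.Icc (0 : ℝ) (b : ℝ)

/-!
Choose `p, q ∈ P` realising `Δ_P(x ± y)`, and let `u = p₀ - q₀`, `v = ±(p₁ - q₁)`. Both are at
most `l` (the coordinate widths) and `u + v ≥ l`, so `u, v ≥ 0`. For `a, ±b ≥ 1` this gives
`Δ_P(ax + by) ≥ a u + (±b) v ≥ u + v ≥ l`; the sign of `a` is normalised by `w_{-a}(P) = w_a(P)`.
-/

theorem isCompact_latticePoly2 (V : Finset (Fin 2 → ℤ)) : IsCompact (latticePoly2 V) :=
  (V.finite_toSet.image _).isCompact_convexHull ℝ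

theorem latticePoly2_nonempty {V : Finset (Fin 2 → ℤ)} (hV : V.Nonempty) :
    (latticePoly2 V).Nonempty :=
  convexHull_nonempty_iff.mpr ((Finset.coe_nonempty.mpr hV).image _)

def dirForm (a : Fin 2 → ℤ) (p : Fin 2 → ℝ) : ℝ :=
  ∑ i, (a i : ℝ) * p i

theorem dirForm_vecCons (a b : ℤ) (p : Fin 2 → ℝ) : dirForm ![a, b] p = a * p 0 + b * p 1 := by
  simp [dirForm, Fin.sum_univ_two]

theorem dirForm_neg (a : Fin 2 → ℤ) (p : Fin 2 → ℝ) : dirForm (-a) p = -dirForm a p := by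
  simp [dirForm]

theorem continuous_dirForm (a : Fin 2 → ℤ) : Continuous (dirForm a) := by
  unfold dirForm
  fun_prop

theorem width2_eq_sSup_sub_sInf (P : Set (Fin 2 → ℝ)) (a : Fin 2 → ℤ) :
    width2 P a = sSup (dirForm a '' P) - sInf (dirForm a '' P) :=
  rfl

theorem width2_neg (P : Set (Fin 2 → ℝ)) (a : Fin 2 → ℤ) : width2 P (-a) = width2 P a := by
  have himage : dirForm (-a) '' P = -(dirForm a '' P) := by
    ext x
    simp [dirForm_neg, neg_eq_iff_eq_neg]
  rw [width2_eq_sSup_sub_sInf, width2_eq_sSup_sub_sInf, himage, Real.sSup_neg, Real.sInf_neg]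
  ring

section Compact

variable {P : Set (Fin 2 → ℝ)}

theorem dirForm_sub_le_width2 (hc : IsCompact P) (a : Fin 2 → ℤ) {p q : Fin 2 → ℝ}
    (hp : p ∈ P) (hq : q ∈ P) : dirForm a p - dirForm a q ≤ width2 P a := by
  have himage : IsCompact (dirForm a '' P) := hc.image (continuous_dirForm a)
  have hsup := le_csSup himage.bddAbove (Set.mem_image_of_mem _ hp)
  have hinf := csInf_le himage.bddBelow (Set.mem_image_of_mem _ hq)
  rw [width2_eq_sSup_sub_sInf]
  linarith

theorem exists_width2_eq_dirForm_sub (hc : IsCompact P) (hne : P.Nonempty) (a : Fin 2 → ℤ) :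
    ∃ p ∈ P, ∃ q ∈ P, width2 P a = dirForm a p - dirForm a q := by
  have himage : IsCompact (dirForm a '' P) := hc.image (continuous_dirForm a)
  obtain ⟨p, hp, hp_sup⟩ := himage.sSup_mem (hne.image _)
  obtain ⟨q, hq, hq_inf⟩ := himage.sInf_mem (hne.image _)
  exact ⟨p, hp, q, hq, by rw [width2_eq_sSup_sub_sInf, hp_sup, hq_inf]⟩

theorem le_width2_of_diag (hc : IsCompact P) (hne : P.Nonempty) {l : ℝ}
    (hx : width2 P ![1, 0] ≤ l) (hy : width2 P ![0, 1] ≤ l) {s : ℤ} (hs : s = 1 ∨ s = -1)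
    (hd : l ≤ width2 P ![1, s]) {a b : ℤ} (ha : 0 < a) (hb : 0 < s * b) :
    l ≤ width2 P ![a, b] := by
  obtain ⟨p, hp, q, hq, hpq⟩ := exists_width2_eq_dirForm_sub hc hne ![1, s]
  have hss : (s : ℝ) * s = 1 := by rcases hs with rfl | rfl <;> norm_num
  set u := p 0 - q 0
  set v := s * (p 1 - q 1)
  have hu : u ≤ l := by
    have hx_pq := dirForm_sub_le_width2 hc ![1, 0] hp hq
    rw [dirForm_vecCons, dirForm_vecCons] at hx_pq
    push_cast at hx_pq
    linarith
  have hv : v ≤ l := by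
    have hy_pq := dirForm_sub_le_width2 hc ![0, 1] hp hq
    have hy_qp := dirForm_sub_le_width2 hc ![0, 1] hq hp
    rw [dirForm_vecCons, dirForm_vecCons] at hy_pq hy_qp
    push_cast at hy_pq hy_qp
    rcases hs with rfl | rfl <;> simp only [v] <;> push_cast <;> linarith
  have huv : l ≤ u + v := by
    rw [hpq, dirForm_vecCons, dirForm_vecCons] at hd
    simp only [u, v]
    push_cast at hd
    linarith
  have ha' : (1 : ℝ) ≤ a := by exact_mod_cast ha
  have hb' : (1 : ℝ) ≤ s * b := by exact_mod_cast hb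
  calc l ≤ u + v := huv
    _ ≤ a * u + (s * b) * v := by
      gcongr
      · exact le_mul_of_one_le_left (by linarith) ha'
      · exact le_mul_of_one_le_left (by linarith) hb'
    _ = dirForm ![a, b] p - dirForm ![a, b] q := by
      rw [dirForm_vecCons, dirForm_vecCons]
      linear_combination (b * (p 1 - q 1)) * hss
    _ ≤ width2 P ![a, b] := dirForm_sub_le_width2 hc _ hp hq

end Compact

/-- Theorem (2D reduction): if `e_□(P) = l` and `Δ_P(x+y) ≥ l`, `Δ_P(x−y) ≥ l`, then
`Δ_P(ax+by) ≥ l` for every primitive `(a,b) ∈ ℤ²` with `a ≠ 0` and `b ≠ 0`. -/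
theorem width_ge_of_diag_ge (V : Finset (Fin 2 → ℤ)) (hV : V.Nonempty)
    (P : Set (Fin 2 → ℝ)) (hP : P = latticePoly2 V) (l : ℤ)
    (he : max (width2 P ![1, 0]) (width2 P ![0, 1]) = (l : ℝ))
    (h1 : (l : ℝ) ≤ width2 P ![1, 1]) (h2 : (l : ℝ) ≤ width2 P ![1, -1]) :
    ∀ a b : ℤ, Int.gcd a b = 1 → a ≠ 0 → b ≠ 0 → (l : ℝ) ≤ width2 P ![a, b] := by
  rintro a b - ha hb
  have hc : IsCompact P := hP ▸ isCompact_latticePoly2 V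
  have hne : P.Nonempty := hP ▸ latticePoly2_nonempty hV
  have hx : width2 P ![1, 0] ≤ l := he ▸ le_max_left _ _
  have hy : width2 P ![0, 1] ≤ l := he ▸ le_max_right _ _
  wlog ha_pos : 0 < a generalizing a b
  · have h := this (-a) (-b) (neg_ne_zero.mpr ha) (neg_ne_zero.mpr hb) (by omega)
    rwa [show ![-a, -b] = -![a, b] by simp, width2_neg] at h
  rcases hb.lt_or_gt with hb_neg | hb_pos
  · exact le_width2_of_diag hc hne hx hy (s := -1) (by norm_num) h2 ha_pos (by omega)
  · exact le_width2_of_diag hc hne hx hy (s := 1) (by norm_num) h1 ha_pos (by omega)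
end

section
/- Let P ⊂ ℝ² be a lattice polygon with e_□(P) = l. Suppose Δ_P(x+y) ≥ l and Δ_P(x−y) ≥ l. Then ls_□(P) = l. -/
/-! The width of `P` in an integer direction `a` is the integer `max_V a·v − min_V a·v`, attained
at two vertices. If `p ↦ A p + v` maps `P` into `[0,l']²`, every row of `A` is a direction of width
at most `l'`, and since `A` is invertible some row has a nonzero first entry and some row a nonzero
second entry. A row `r = (r₀, r₁)` with a single nonzero entry is a multiple of a coordinate vector,
so its width is at least that of `x` or `y`. If both entries are nonzero, take the difference
`z = u − w` of two vertices realising the width in the diagonal direction `(1, ±1)` whose signs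
match those of `r`; as `|z₀|, |z₁| ≤ l` while `z₀ ± z₁ ≥ l`, the products `r₀z₀` and `r₁z₁` have
the same sign, so `r·z` has absolute value at least `|z₀| + |z₁| ≥ l`. Hence `l' ≥ l`. -/

open Matrix

theorem Int.abs_add_abs_le_abs_mul_add_mul {p q x y : ℤ} (hp : p ≠ 0) (hq : q ≠ 0)
    (h : 0 ≤ p * x * (q * y)) : |x| + |y| ≤ |p * x + q * y| := by
  rw [(abs_add_eq_add_abs_iff _ _).2 (mul_nonneg_iff.1 h), abs_mul, abs_mul]
  gcongr
  · exact le_mul_of_one_le_left (abs_nonneg x) (Int.one_le_abs hp)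
  · exact le_mul_of_one_le_left (abs_nonneg y) (Int.one_le_abs hq)

section MaximumPrinciple

variable {𝕜 E : Type*} [Field 𝕜] [LinearOrder 𝕜] [IsStrictOrderedRing 𝕜] [AddCommGroup E]
  [Module 𝕜 E] {s : Set E} {f : E → 𝕜} {m : 𝕜}

theorem IsGreatest.image_convexHull (h : IsGreatest (f '' s) m)
    (hf : ConvexOn 𝕜 (convexHull 𝕜 s) f) : IsGreatest (f '' convexHull 𝕜 s) m := by
  refine ⟨Set.image_mono (subset_convexHull 𝕜 s) h.1, ?_⟩
  rintro _ ⟨x, hx, rfl⟩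
  obtain ⟨y, hy, hxy⟩ := hf.exists_ge_of_mem_convexHull (subset_convexHull 𝕜 s) hx
  exact hxy.trans (h.2 (Set.mem_image_of_mem f hy))

theorem IsLeast.image_convexHull (h : IsLeast (f '' s) m)
    (hf : ConcaveOn 𝕜 (convexHull 𝕜 s) f) : IsLeast (f '' convexHull 𝕜 s) m := by
  refine ⟨Set.image_mono (subset_convexHull 𝕜 s) h.1, ?_⟩
  rintro _ ⟨x, hx, rfl⟩
  obtain ⟨y, hy, hyx⟩ := hf.exists_le_of_mem_convexHull (subset_convexHull 𝕜 s) hx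
  exact (h.2 (Set.mem_image_of_mem f hy)).trans hyx

end MaximumPrinciple

section LatticeWidth

variable {n : Type*} [Fintype n]

def latticeWidth (V : Finset (n → ℤ)) (hV : V.Nonempty) (a : n → ℤ) : ℤ :=
  V.sup' hV (a ⬝ᵥ ·) - V.inf' hV (a ⬝ᵥ ·)

theorem image_dotProduct_intCast (a : n → ℤ) (V : Set (n → ℤ)) :
    (fun p => ∑ i, (a i : ℝ) * p i) '' ((fun v i => (v i : ℝ)) '' V) =
      Int.cast '' ((a ⬝ᵥ ·) '' V) := by
  simp only [Set.image_image]
  congr! with v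
  exact ((Int.castRingHom ℝ).map_dotProduct a v).symm

variable {V : Finset (n → ℤ)} (hV : V.Nonempty)

theorem abs_dotProduct_sub_le_latticeWidth (a : n → ℤ) {u w : n → ℤ} (hu : u ∈ V)
    (hw : w ∈ V) :
    |a ⬝ᵥ (u - w)| ≤ latticeWidth V hV a := by
  rw [latticeWidth, dotProduct_sub, abs_sub_le_iff]
  constructor <;> linarith [V.le_sup' (a ⬝ᵥ ·) hu, V.le_sup' (a ⬝ᵥ ·) hw,
    V.inf'_le (a ⬝ᵥ ·) hu, V.inf'_le (a ⬝ᵥ ·) hw]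

theorem exists_latticeWidth_eq (a : n → ℤ) :
    ∃ u ∈ V, ∃ w ∈ V, latticeWidth V hV a = a ⬝ᵥ (u - w) := by
  obtain ⟨u, hu, hsup⟩ := V.exists_mem_eq_sup' hV (a ⬝ᵥ ·)
  obtain ⟨w, hw, hinf⟩ := V.exists_mem_eq_inf' hV (a ⬝ᵥ ·)
  exact ⟨u, hu, w, hw, by rw [latticeWidth, hsup, hinf, dotProduct_sub]⟩

theorem latticeWidth_single_one_le [DecidableEq n] {r : n → ℤ} {i : n}
    (hr : Pi.single i (r i) = r) (hri : r i ≠ 0) :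
    latticeWidth V hV (Pi.single i 1) ≤ latticeWidth V hV r := by
  obtain ⟨u, hu, w, hw, h⟩ := exists_latticeWidth_eq hV (Pi.single i 1)
  rw [single_dotProduct, one_mul] at h
  calc latticeWidth V hV (Pi.single i 1) ≤ |(u - w) i| := h ▸ le_abs_self _
    _ ≤ |r i| * |(u - w) i| := le_mul_of_one_le_left (abs_nonneg _) (Int.one_le_abs hri)
    _ = |r ⬝ᵥ (u - w)| := by rw [← abs_mul, ← single_dotProduct, hr]
    _ ≤ latticeWidth V hV r := abs_dotProduct_sub_le_latticeWidth hV r hu hw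

end LatticeWidth

section LatticePolygon

variable {V : Finset (Fin 2 → ℤ)} (hV : V.Nonempty)

theorem isGreatest_image_latticePoly2 (a : Fin 2 → ℤ) :
    IsGreatest ((fun p => ∑ i, (a i : ℝ) * p i) '' latticePoly2 V)
      ((V.sup' hV (a ⬝ᵥ ·) : ℤ) : ℝ) := by
  refine IsGreatest.image_convexHull ?_
    ((dotProductBilin ℝ ℝ (fun i => (a i : ℝ))).convexOn (convex_convexHull ℝ _))
  obtain ⟨u, hu, hsup⟩ := V.exists_mem_eq_sup' hV (a ⬝ᵥ ·)
  rw [image_dotProduct_intCast, hsup]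
  refine Int.cast_mono.map_isGreatest ⟨Set.mem_image_of_mem _ hu, ?_⟩
  rintro _ ⟨v, hv, rfl⟩
  exact hsup ▸ V.le_sup' (a ⬝ᵥ ·) hv

theorem isLeast_image_latticePoly2 (a : Fin 2 → ℤ) :
    IsLeast ((fun p => ∑ i, (a i : ℝ) * p i) '' latticePoly2 V)
      ((V.inf' hV (a ⬝ᵥ ·) : ℤ) : ℝ) := by
  refine IsLeast.image_convexHull ?_
    ((dotProductBilin ℝ ℝ (fun i => (a i : ℝ))).concaveOn (convex_convexHull ℝ _))
  obtain ⟨u, hu, hinf⟩ := V.exists_mem_eq_inf' hV (a ⬝ᵥ ·)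
  rw [image_dotProduct_intCast, hinf]
  refine Int.cast_mono.map_isLeast ⟨Set.mem_image_of_mem _ hu, ?_⟩
  rintro _ ⟨v, hv, rfl⟩
  exact hinf ▸ V.inf'_le (a ⬝ᵥ ·) hv

theorem width2_latticePoly2 (a : Fin 2 → ℤ) :
    width2 (latticePoly2 V) a = latticeWidth V hV a := by
  rw [width2, (isGreatest_image_latticePoly2 hV a).csSup_eq,
    (isLeast_image_latticePoly2 hV a).csInf_eq, latticeWidth, Int.cast_sub]


theorem fitsInSquare_latticePoly2_iff (l : ℤ) :
    FitsInSquare (latticePoly2 V) l ↔ ∃ A : Matrix (Fin 2) (Fin 2) ℤ,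
      (A.det = 1 ∨ A.det = -1) ∧ ∀ i, latticeWidth V hV (A i) ≤ l := by
  constructor
  · rintro ⟨A, v, hdet, hA⟩
    refine ⟨A, hdet, fun i => ?_⟩
    have hvertex : ∀ x ∈ V, 0 ≤ A i ⬝ᵥ x + v i ∧ A i ⬝ᵥ x + v i ≤ l := fun x hx => by
      have hcast :
          (A.map (fun z : ℤ => (z : ℝ)) *ᵥ fun j => (x j : ℝ)) i = ((A i ⬝ᵥ x : ℤ) : ℝ) :=
        ((Int.castRingHom ℝ).map_mulVec A x i).symm
      have := hA _ (subset_convexHull ℝ _ ⟨x, hx, rfl⟩) i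
      rw [Pi.add_apply, hcast, Set.mem_Icc] at this
      exact_mod_cast this
    obtain ⟨u, hu, w, hw, h⟩ := exists_latticeWidth_eq hV (A i)
    rw [h, dotProduct_sub]
    linarith [hvertex u hu, hvertex w hw]
  · rintro ⟨A, hdet, hA⟩
    refine ⟨A, fun i => -V.inf' hV (A i ⬝ᵥ ·), hdet, fun p hp i => ?_⟩
    have hlo := (isLeast_image_latticePoly2 hV (A i)).2 ⟨p, hp, rfl⟩
    have hhi := (isGreatest_image_latticePoly2 hV (A i)).2 ⟨p, hp, rfl⟩
    have hwidth : (latticeWidth V hV (A i) : ℝ) ≤ l := by exact_mod_cast hA i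
    rw [latticeWidth, Int.cast_sub] at hwidth
    change ∑ j, (A i j : ℝ) * p j + _ ∈ _
    push_cast
    constructor <;> linarith

theorem le_latticeWidth_of_ne_zero {l : ℤ}
    (h10 : latticeWidth V hV ![1, 0] ≤ l) (h01 : latticeWidth V hV ![0, 1] ≤ l)
    (h11 : l ≤ latticeWidth V hV ![1, 1]) (h1m : l ≤ latticeWidth V hV ![1, -1])
    {r : Fin 2 → ℤ} (hr0 : r 0 ≠ 0) (hr1 : r 1 ≠ 0) : l ≤ latticeWidth V hV r := by
  suffices ∃ u ∈ V, ∃ w ∈ V, l ≤ |u 0 - w 0| + |u 1 - w 1| ∧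
      0 ≤ r 0 * (u 0 - w 0) * (r 1 * (u 1 - w 1)) by
    obtain ⟨u, hu, w, hw, hl, hsign⟩ := this
    calc l ≤ |u 0 - w 0| + |u 1 - w 1| := hl
      _ ≤ |r 0 * (u 0 - w 0) + r 1 * (u 1 - w 1)| :=
        Int.abs_add_abs_le_abs_mul_add_mul hr0 hr1 hsign
      _ = |r ⬝ᵥ (u - w)| := by simp [dotProduct, Fin.sum_univ_two]
      _ ≤ latticeWidth V hV r := abs_dotProduct_sub_le_latticeWidth hV r hu hw
  have hcoord : ∀ u ∈ V, ∀ w ∈ V, |u 0 - w 0| ≤ l ∧ |u 1 - w 1| ≤ l := fun u hu w hw =>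
    ⟨by simpa [dotProduct] using (abs_dotProduct_sub_le_latticeWidth hV ![1, 0] hu hw).trans h10,
      by simpa [dotProduct] using (abs_dotProduct_sub_le_latticeWidth hV ![0, 1] hu hw).trans h01⟩
  rcases (mul_ne_zero hr0 hr1).lt_or_gt with hneg | hpos
  · obtain ⟨u, hu, w, hw, h⟩ := exists_latticeWidth_eq hV ![1, -1]
    have hdiag : latticeWidth V hV ![1, -1] = (u 0 - w 0) - (u 1 - w 1) := by
      simp [h, dotProduct, sub_eq_add_neg]
    obtain ⟨hx, hy⟩ := hcoord u hu w hw
    rw [abs_le] at hx hy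
    have hx0 : 0 ≤ u 0 - w 0 := by linarith
    have hy0 : u 1 - w 1 ≤ 0 := by linarith
    refine ⟨u, hu, w, hw, ?_, ?_⟩
    · rw [abs_of_nonneg hx0, abs_of_nonpos hy0]; linarith
    · nlinarith [mul_nonpos_of_nonneg_of_nonpos hx0 hy0]
  · obtain ⟨u, hu, w, hw, h⟩ := exists_latticeWidth_eq hV ![1, 1]
    have hdiag : latticeWidth V hV ![1, 1] = (u 0 - w 0) + (u 1 - w 1) := by
      simp [h, dotProduct]
    obtain ⟨hx, hy⟩ := hcoord u hu w hw
    rw [abs_le] at hx hy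
    have hx0 : 0 ≤ u 0 - w 0 := by linarith
    have hy0 : 0 ≤ u 1 - w 1 := by linarith
    refine ⟨u, hu, w, hw, ?_, ?_⟩
    · rw [abs_of_nonneg hx0, abs_of_nonneg hy0]; linarith
    · nlinarith [mul_nonneg hx0 hy0]

theorem le_of_forall_latticeWidth_row_le {l l' : ℤ}
    (he : max (latticeWidth V hV ![1, 0]) (latticeWidth V hV ![0, 1]) = l)
    (h11 : l ≤ latticeWidth V hV ![1, 1]) (h1m : l ≤ latticeWidth V hV ![1, -1])
    {A : Matrix (Fin 2) (Fin 2) ℤ} (hA : A.det ≠ 0)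
    (hrow : ∀ i, latticeWidth V hV (A i) ≤ l') : l ≤ l' := by
  have h10 : latticeWidth V hV ![1, 0] ≤ l := he ▸ le_max_left _ _
  have h01 : latticeWidth V hV ![0, 1] ≤ l := he ▸ le_max_right _ _
  by_cases hmixed : ∃ i, A i 0 ≠ 0 ∧ A i 1 ≠ 0
  · obtain ⟨i, hi0, hi1⟩ := hmixed
    exact (le_latticeWidth_of_ne_zero hV h10 h01 h11 h1m hi0 hi1).trans (hrow i)
  push Not at hmixed
  have hcol : ∀ j, ∃ i, A i j ≠ 0 := fun j => by
    by_contra! h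
    exact hA (det_eq_zero_of_column_eq_zero j h)
  obtain ⟨i, hi⟩ := hcol 0
  obtain ⟨k, hk⟩ := hcol 1
  have hAi : Pi.single 0 (A i 0) = A i := by
    ext j; fin_cases j <;> simp [hmixed i hi]
  have hk0 : A k 0 = 0 := by
    by_contra h
    exact hk (hmixed k h)
  have hAk : Pi.single 1 (A k 1) = A k := by
    ext j; fin_cases j <;> simp [hk0]
  have he0 : (Pi.single 0 1 : Fin 2 → ℤ) = ![1, 0] := by ext j; fin_cases j <;> rfl
  have he1 : (Pi.single 1 1 : Fin 2 → ℤ) = ![0, 1] := by ext j; fin_cases j <;> rfl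
  rw [← he]
  exact max_le (he0 ▸ (latticeWidth_single_one_le hV hAi hi).trans (hrow i))
    (he1 ▸ (latticeWidth_single_one_le hV hAk hk).trans (hrow k))

end LatticePolygon

/-- If `e_□(P) = l` and `Δ_P(x+y) ≥ l`, `Δ_P(x−y) ≥ l`, then `ls_□(P) = l`:
`l` is the least integer `l'` such that `T(P) ⊆ [0,l']²` for some affine unimodular `T`. -/
theorem latticeSize_eq_of_diag_ge (V : Finset (Fin 2 → ℤ)) (hV : V.Nonempty)
    (P : Set (Fin 2 → ℝ)) (hP : P = latticePoly2 V) (l : ℤ)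
    (he : max (width2 P ![1, 0]) (width2 P ![0, 1]) = (l : ℝ))
    (h1 : (l : ℝ) ≤ width2 P ![1, 1]) (h2 : (l : ℝ) ≤ width2 P ![1, -1]) :
    IsLeast {l' : ℤ | FitsInSquare P l'} l := by
  subst hP
  simp only [width2_latticePoly2 hV] at he h1 h2
  have he : max (latticeWidth V hV ![1, 0]) (latticeWidth V hV ![0, 1]) = l := by
    exact_mod_cast he
  refine ⟨(fitsInSquare_latticePoly2_iff hV l).2 ⟨1, Or.inl det_one, ?_⟩, fun l' hl' => ?_⟩
  · rw [Fin.forall_fin_two, ← he, one_fin_two]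
    exact ⟨le_max_left _ _, le_max_right _ _⟩
  · obtain ⟨A, hdet, hrow⟩ := (fitsInSquare_latticePoly2_iff hV l').1 hl'
    exact le_of_forall_latticeWidth_row_le hV he (by exact_mod_cast h1) (by exact_mod_cast h2)
      (by rcases hdet with h | h <;> simp [h]) hrow
end

section
/- Let P ⊂ ℝ² be a lattice polygon with Δ_P(x) = Δ_P(y) = l. Then ls_□(P) = l. -/
/-! The extremes of the coordinates on `P` are attained at lattice points, so translating the
bounding box of `P` to the origin fits `P` into `[0,l]²`. Conversely, let `p, q ∈ P` realise the
width in the `x`-direction and `r, s ∈ P` the width in the `y`-direction, so that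
`p - q = (l, σ)` and `r - s = (τ, l)` with `|σ|, |τ| ≤ l`. If a row `(a, b)` of a unimodular `A`
had `|a| > |b|`, then already `|a l + b σ| ≥ l`, so the form `a x + b y` would have width at
least `l` on `P`; symmetrically for `|a| < |b|`. Hence if `A P + v ⊆ [0,l']²` with `l' < l`, both
rows of `A` satisfy `|a| = |b|`; then `a ≡ b` and `c ≡ d` modulo `2`, so `det A` is even, which
is absurd. -/

lemma le_abs_mul_add_mul {a b : ℤ} {l s : ℝ} (hab : |b| < |a|) (hs : |s| ≤ l) :
    l ≤ |a * l + b * s| := by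
  have hl : 0 ≤ l := (abs_nonneg s).trans hs
  have hab' : |(b : ℝ)| + 1 ≤ |(a : ℝ)| := by exact_mod_cast Int.add_one_le_iff.2 hab
  calc l ≤ |(a : ℝ)| * l - |(b : ℝ)| * l := by nlinarith [mul_nonneg (sub_nonneg.2 hab') hl]
    _ ≤ |a * l| - |b * s| := by
      rw [abs_mul, abs_mul, abs_of_nonneg hl]
      gcongr
    _ ≤ |a * l + b * s| := abs_sub_abs_le_abs_add _ _

lemma abs_eq_abs_of_abs_mul_add_mul_le {a b : ℤ} {l l' s t : ℝ} (hs : |s| ≤ l) (ht : |t| ≤ l)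
    (hl' : l' < l) (h₁ : |a * l + b * s| ≤ l') (h₂ : |a * t + b * l| ≤ l') : |a| = |b| := by
  rcases lt_trichotomy |a| |b| with hab | hab | hab
  · have := le_abs_mul_add_mul (l := l) hab ht
    rw [add_comm] at this
    linarith
  · exact hab
  · linarith [le_abs_mul_add_mul hab hs]

lemma Matrix.even_det_of_abs_eq (A : Matrix (Fin 2) (Fin 2) ℤ) (h : ∀ i, |A i 0| = |A i 1|) :
    Even A.det := by
  have hpar : ∀ i, Even (A i 0 - A i 1) := fun i =>
    Int.even_sub.2 (by rw [← even_abs, h i, even_abs])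
  rw [Matrix.det_fin_two,
    show A 0 0 * A 1 1 - A 0 1 * A 1 0 = (A 0 0 - A 0 1) * A 1 1 - A 0 1 * (A 1 0 - A 1 1) by ring]
  exact ((hpar 0).mul_right _).sub ((hpar 1).mul_left _)

lemma map_intCast_mulVec_add_apply (A : Matrix (Fin 2) (Fin 2) ℤ) (v : Fin 2 → ℤ) (z : Fin 2 → ℝ)
    (i : Fin 2) :
    ((A.map (fun z : ℤ => (z : ℝ))).mulVec z + fun j => (v j : ℝ)) i =
      A i 0 * z 0 + A i 1 * z 1 + v i := by
  simp only [Pi.add_apply, Matrix.mulVec, dotProduct, Fin.sum_univ_two, Matrix.map_apply]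

lemma fitsInSquare_of_bounds {P : Set (Fin 2 → ℝ)} {x₀ y₀ l : ℤ}
    (hx : ∀ z ∈ P, (x₀ : ℝ) ≤ z 0 ∧ z 0 ≤ x₀ + l) (hy : ∀ z ∈ P, (y₀ : ℝ) ≤ z 1 ∧ z 1 ≤ y₀ + l) :
    FitsInSquare P l := by
  refine ⟨1, ![-x₀, -y₀], Or.inl Matrix.det_one, fun z hz i => ?_⟩
  rw [map_intCast_mulVec_add_apply, Set.mem_Icc]
  have hz₀ := hx z hz
  have hz₁ := hy z hz
  fin_cases i <;> simp [Matrix.one_apply] <;> constructor <;> linarith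

lemma le_of_fitsInSquare {P : Set (Fin 2 → ℝ)} {p q r s : Fin 2 → ℝ} {l : ℝ} {l' : ℤ}
    (hp : p ∈ P) (hq : q ∈ P) (hr : r ∈ P) (hs : s ∈ P)
    (hx : ∀ z ∈ P, q 0 ≤ z 0 ∧ z 0 ≤ p 0) (hy : ∀ z ∈ P, s 1 ≤ z 1 ∧ z 1 ≤ r 1)
    (hpq : p 0 - q 0 = l) (hrs : r 1 - s 1 = l) (h : FitsInSquare P l') : l ≤ l' := by
  obtain ⟨A, v, hdet, hfit⟩ := h
  by_contra! hlt
  have hrow : ∀ i, ∀ z ∈ P, ∀ z' ∈ P, |A i 0 * (z 0 - z' 0) + A i 1 * (z 1 - z' 1)| ≤ l' := by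
    intro i z hz z' hz'
    have h₁ := hfit z hz i
    have h₂ := hfit z' hz' i
    rw [map_intCast_mulVec_add_apply, Set.mem_Icc] at h₁ h₂
    rw [abs_le]
    constructor <;> linarith
  have hσ : |p 1 - q 1| ≤ l := by
    rw [abs_le]
    constructor <;> linarith [hy p hp, hy q hq]
  have hτ : |r 0 - s 0| ≤ l := by
    rw [abs_le]
    constructor <;> linarith [hx r hr, hx s hs]
  have hA : ∀ i, |A i 0| = |A i 1| := fun i =>
    abs_eq_abs_of_abs_mul_add_mul_le hσ hτ hlt (hpq ▸ hrow i p hp q hq) (hrs ▸ hrow i r hr s hs)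
  have heven := A.even_det_of_abs_eq hA
  rcases hdet with hdet | hdet <;> simp [hdet] at heven

lemma latticePoly2_exists_isMaxOn (V : Finset (Fin 2 → ℤ)) (hV : V.Nonempty)
    (f : (Fin 2 → ℝ) →ₗ[ℝ] ℝ) : ∃ v ∈ V, IsMaxOn f (latticePoly2 V) (fun i => (v i : ℝ)) := by
  obtain ⟨v, hv, hmax⟩ := V.exists_max_image (fun v : Fin 2 → ℤ => f fun i => (v i : ℝ)) hV
  refine ⟨v, hv, convexHull_min ?_ (convex_halfSpace_le f.isLinear _)⟩
  rintro _ ⟨w, hw, rfl⟩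
  exact hmax w hw

lemma latticePoly2_exists_coord_bounds (V : Finset (Fin 2 → ℤ)) (hV : V.Nonempty) (i : Fin 2) :
    ∃ p ∈ V, ∃ q ∈ V, ∀ z ∈ latticePoly2 V, (q i : ℝ) ≤ z i ∧ z i ≤ p i := by
  obtain ⟨p, hp, hmax⟩ := latticePoly2_exists_isMaxOn V hV (LinearMap.proj i)
  obtain ⟨q, hq, hmin⟩ := latticePoly2_exists_isMaxOn V hV (-LinearMap.proj i)
  exact ⟨p, hp, q, hq, fun z hz => ⟨neg_le_neg_iff.1 (hmin hz), hmax hz⟩⟩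

lemma width2_single {P : Set (Fin 2 → ℝ)} {i : Fin 2} {p q : Fin 2 → ℝ} (hp : p ∈ P) (hq : q ∈ P)
    (hbounds : ∀ z ∈ P, q i ≤ z i ∧ z i ≤ p i) : width2 P (Pi.single i 1) = p i - q i := by
  have hform : (fun z : Fin 2 → ℝ => ∑ j, ((Pi.single i 1 : Fin 2 → ℤ) j : ℝ) * z j) = (· i) := by
    funext z
    simp [Pi.single_apply]
  have hsup : IsGreatest ((· i) '' P) (p i) :=
    ⟨⟨p, hp, rfl⟩, Set.forall_mem_image.2 fun z hz => (hbounds z hz).2⟩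
  have hinf : IsLeast ((· i) '' P) (q i) :=
    ⟨⟨q, hq, rfl⟩, Set.forall_mem_image.2 fun z hz => (hbounds z hz).1⟩
  rw [width2, hform, hsup.csSup_eq, hinf.csInf_eq]

/-- If `Δ_P(x) = Δ_P(y) = l` then `ls_□(P) = l`. -/
theorem latticeSize_eq_of_touch (V : Finset (Fin 2 → ℤ)) (hV : V.Nonempty)
    (P : Set (Fin 2 → ℝ)) (hP : P = latticePoly2 V) (l : ℤ)
    (hx : width2 P ![1, 0] = (l : ℝ)) (hy : width2 P ![0, 1] = (l : ℝ)) :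
    IsLeast {l' : ℤ | FitsInSquare P l'} l := by
  subst hP
  have hmem : ∀ v ∈ V, (fun i => (v i : ℝ)) ∈ latticePoly2 V :=
    fun v hv => subset_convexHull ℝ _ ⟨v, hv, rfl⟩
  obtain ⟨p, hpV, q, hqV, hpq⟩ := latticePoly2_exists_coord_bounds V hV 0
  obtain ⟨r, hrV, s, hsV, hrs⟩ := latticePoly2_exists_coord_bounds V hV 1
  rw [show (![1, 0] : Fin 2 → ℤ) = Pi.single 0 1 by decide,
    width2_single (hmem p hpV) (hmem q hqV) hpq] at hx
  rw [show (![0, 1] : Fin 2 → ℤ) = Pi.single 1 1 by decide,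
    width2_single (hmem r hrV) (hmem s hsV) hrs] at hy
  refine ⟨fitsInSquare_of_bounds (x₀ := q 0) (y₀ := s 1) ?_ ?_, fun l' h => ?_⟩
  · exact fun z hz => ⟨(hpq z hz).1, by linarith [hpq z hz]⟩
  · exact fun z hz => ⟨(hrs z hz).1, by linarith [hrs z hz]⟩
  · exact_mod_cast le_of_fitsInSquare (hmem p hpV) (hmem q hqV) (hmem r hrV) (hmem s hsV)
      hpq hrs hx hy h
end

section
/- Let P ⊂ ℝ² be a lattice polygon with e_□(P) = l. If min(Δ_P(x), Δ_P(y)) ≤ l−1 and min(Δ_P(x+y), Δ_P(x−y)) ≤ l−1, then there exists a 2×2 integer matrix A with det A = ±1 such that e_□(AP) ≤ l−1; in particular ls_□(P) ≤ l−1. -/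
/-!
Each of `x, y` together with each of `x + y, x − y` forms a basis of `(ℤ²)*`, so the hypotheses
give a unimodular matrix `A` whose two rows are directions in which `P` has lattice width at most
`l − 1`. Then `AP` has width at most `l − 1` in both coordinate directions, and since linear forms
with integer coefficients take their extreme values on `P` at lattice vertices, an integer
translate of `AP` lies in `[0, l − 1]²`.
-/

open Matrix

section ConvexHull

variable {E : Type*} [AddCommGroup E] [Module ℝ E] {f : E → ℝ} {s : Set E}

lemma IsLinearMap.exists_isGreatest_image_convexHull (hf : IsLinearMap ℝ f) (hs : s.Finite)
    (hne : s.Nonempty) : ∃ x ∈ s, IsGreatest (f '' convexHull ℝ s) (f x) := by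
  obtain ⟨x, hx, hmax⟩ := s.exists_max_image f hs hne
  refine ⟨x, hx, ⟨x, subset_convexHull ℝ s hx, rfl⟩, ?_⟩
  rintro _ ⟨p, hp, rfl⟩
  exact convexHull_min hmax (convex_halfSpace_le hf (f x)) hp

lemma IsLinearMap.exists_isLeast_image_convexHull (hf : IsLinearMap ℝ f) (hs : s.Finite)
    (hne : s.Nonempty) : ∃ x ∈ s, IsLeast (f '' convexHull ℝ s) (f x) := by
  obtain ⟨x, hx, hmin⟩ := s.exists_min_image f hs hne
  refine ⟨x, hx, ⟨x, subset_convexHull ℝ s hx, rfl⟩, ?_⟩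
  rintro _ ⟨p, hp, rfl⟩
  exact convexHull_min hmin (convex_halfSpace_ge hf (f x)) hp

end ConvexHull

lemma isLinearMap_sum_intCast_mul {ι : Type*} [Fintype ι] (a : ι → ℤ) :
    IsLinearMap ℝ fun p : ι → ℝ => ∑ i, (a i : ℝ) * p i where
  map_add p q := by simp only [Pi.add_apply, mul_add, Finset.sum_add_distrib]
  map_smul r p := by
    simp only [Pi.smul_apply, smul_eq_mul, Finset.mul_sum, mul_left_comm]

section LatticePolygon

variable {V : Finset (Fin 2 → ℤ)}

lemma exists_int_le_and_le_add_width2 (hV : V.Nonempty) (a : Fin 2 → ℤ) :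
    ∃ m : ℤ, ∀ p ∈ latticePoly2 V,
      (m : ℝ) ≤ ∑ i, (a i : ℝ) * p i ∧ ∑ i, (a i : ℝ) * p i ≤ m + width2 (latticePoly2 V) a := by
  have hf := isLinearMap_sum_intCast_mul a
  have hs := V.finite_toSet.image fun v : Fin 2 → ℤ => fun i => (v i : ℝ)
  have hne := hV.to_set.image fun v : Fin 2 → ℤ => fun i => (v i : ℝ)
  obtain ⟨-, ⟨v, -, rfl⟩, hmin⟩ := hf.exists_isLeast_image_convexHull hs hne
  obtain ⟨x, -, hmax⟩ := hf.exists_isGreatest_image_convexHull hs hne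
  refine ⟨∑ i, a i * v i, fun p hp => ⟨?_, ?_⟩⟩
  · push_cast
    exact hmin.2 ⟨p, hp, rfl⟩
  · rw [width2, latticePoly2, hmax.csSup_eq, hmin.csInf_eq]
    push_cast
    linarith [hmax.2 ⟨p, hp, rfl⟩]

lemma width2_image_mulVec (A : Matrix (Fin 2) (Fin 2) ℤ) (P : Set (Fin 2 → ℝ)) (a : Fin 2 → ℤ) :
    width2 ((fun p => (A.map (fun z : ℤ => (z : ℝ))).mulVec p) '' P) a = width2 P (a ᵥ* A) := by
  have h : (fun p => ∑ i, (a i : ℝ) * (A.map (fun z : ℤ => (z : ℝ)) *ᵥ p) i) =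
      fun p => ∑ j, ((a ᵥ* A) j : ℝ) * p j := by
    funext p
    simp only [mulVec, vecMul, dotProduct, map_apply, Fin.sum_univ_two]
    push_cast
    ring
  simp only [width2, Set.image_image, h]

variable {A : Matrix (Fin 2) (Fin 2) ℤ} {k : ℤ}

lemma fitsInSquare_of_width2_row_le (hV : V.Nonempty) (hA : A.det = 1 ∨ A.det = -1)
    (hw : ∀ i, width2 (latticePoly2 V) (A i) ≤ k) : FitsInSquare (latticePoly2 V) k := by
  choose m hm using fun i => exists_int_le_and_le_add_width2 hV (A i)
  refine ⟨A, -m, hA, fun p hp i => ?_⟩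
  have hrow : (A.map (fun z : ℤ => (z : ℝ)) *ᵥ p) i = ∑ j, (A i j : ℝ) * p j := rfl
  obtain ⟨hlo, hhi⟩ := hm i p hp
  simp only [Pi.add_apply, hrow, Pi.neg_apply, Int.cast_neg, Set.mem_Icc]
  constructor <;> linarith [hw i]

lemma exists_unimodular_of_width2_row_le (hV : V.Nonempty) (hA : A.det = 1 ∨ A.det = -1)
    (hw : ∀ i, width2 (latticePoly2 V) (A i) ≤ k) :
    (∃ A : Matrix (Fin 2) (Fin 2) ℤ, (A.det = 1 ∨ A.det = -1) ∧
      max (width2 ((fun p => (A.map (fun z : ℤ => (z : ℝ))).mulVec p) '' latticePoly2 V) ![1, 0])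
        (width2 ((fun p => (A.map (fun z : ℤ => (z : ℝ))).mulVec p) '' latticePoly2 V) ![0, 1])
          ≤ k) ∧
    FitsInSquare (latticePoly2 V) k := by
  have h0 : ![1, 0] ᵥ* A = A 0 := by ext j; simp [vecMul, dotProduct]
  have h1 : ![0, 1] ᵥ* A = A 1 := by ext j; simp [vecMul, dotProduct]
  refine ⟨⟨A, hA, ?_⟩, fitsInSquare_of_width2_row_le hV hA hw⟩
  rw [width2_image_mulVec, width2_image_mulVec, h0, h1]
  exact max_le (hw 0) (hw 1)

end LatticePolygon

theorem exists_unimodular_reducing_general (V : Finset (Fin 2 → ℤ)) (hV : V.Nonempty)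
    (P : Set (Fin 2 → ℝ)) (hP : P = latticePoly2 V) (l : ℤ)
    (h1 : min (width2 P ![1, 0]) (width2 P ![0, 1]) ≤ (l : ℝ) - 1)
    (h2 : min (width2 P ![1, 1]) (width2 P ![1, -1]) ≤ (l : ℝ) - 1) :
    (∃ A : Matrix (Fin 2) (Fin 2) ℤ, (A.det = 1 ∨ A.det = -1) ∧
      max (width2 ((fun p => (A.map (fun z : ℤ => (z : ℝ))).mulVec p) '' P) ![1, 0])
        (width2 ((fun p => (A.map (fun z : ℤ => (z : ℝ))).mulVec p) '' P) ![0, 1]) ≤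
          (l : ℝ) - 1) ∧
    FitsInSquare P (l - 1) := by
  subst hP
  have hl : (l : ℝ) - 1 = ((l - 1 : ℤ) : ℝ) := by push_cast; rfl
  rw [hl] at h1 h2 ⊢
  rcases min_le_iff.mp h1 with hb | hb <;> rcases min_le_iff.mp h2 with hc | hc
  · exact exists_unimodular_of_width2_row_le hV (A := !![1, 0; 1, 1])
      (by norm_num [det_fin_two_of]) (Fin.forall_fin_two.2 ⟨hb, hc⟩)
  · exact exists_unimodular_of_width2_row_le hV (A := !![1, 0; 1, -1])
      (by norm_num [det_fin_two_of]) (Fin.forall_fin_two.2 ⟨hb, hc⟩)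
  · exact exists_unimodular_of_width2_row_le hV (A := !![0, 1; 1, 1])
      (by norm_num [det_fin_two_of]) (Fin.forall_fin_two.2 ⟨hb, hc⟩)
  · exact exists_unimodular_of_width2_row_le hV (A := !![0, 1; 1, -1])
      (by norm_num [det_fin_two_of]) (Fin.forall_fin_two.2 ⟨hb, hc⟩)

/-- If `e_□(P) = l`, `min(Δ_P(x), Δ_P(y)) ≤ l−1` and `min(Δ_P(x+y), Δ_P(x−y)) ≤ l−1`,
then there is a unimodular `A` with `e_□(AP) ≤ l−1`; in particular `ls_□(P) ≤ l−1`. -/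
theorem exists_unimodular_reducing (V : Finset (Fin 2 → ℤ)) (hV : V.Nonempty)
    (P : Set (Fin 2 → ℝ)) (hP : P = latticePoly2 V) (l : ℤ)
    (he : max (width2 P ![1, 0]) (width2 P ![0, 1]) = (l : ℝ))
    (h1 : min (width2 P ![1, 0]) (width2 P ![0, 1]) ≤ (l : ℝ) - 1)
    (h2 : min (width2 P ![1, 1]) (width2 P ![1, -1]) ≤ (l : ℝ) - 1) :
    (∃ A : Matrix (Fin 2) (Fin 2) ℤ, (A.det = 1 ∨ A.det = -1) ∧
      max (width2 ((fun p => (A.map (fun z : ℤ => (z : ℝ))).mulVec p) '' P) ![1, 0])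
        (width2 ((fun p => (A.map (fun z : ℤ => (z : ℝ))).mulVec p) '' P) ![0, 1]) ≤
          (l : ℝ) - 1) ∧
    FitsInSquare P (l - 1) :=
  exists_unimodular_reducing_general V hV P hP l h1 h2
end

section
/- Let P ⊂ ℝ³ be a lattice polytope with Δ_P(x) = l₁ ≤ Δ_P(y) = l₂ ≤ Δ_P(z) = l. Suppose Δ_P(x+y) ≥ l₂ and Δ_P(x−y) ≥ l₂. If integers a, b satisfy Δ_P(ax + by + z) < l, then: (1) if |a| ≥ |b| then |b| ≤ (2l−1)/l₂; and (2) if |b| ≥ |a| then |a| ≤ (2l−1)/l₁. -/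
/-- The lattice polytope determined by a nonempty finite set `V` of lattice points:
the convex hull in `ℝ³` of the corresponding real points. -/
def latticePoly3 (V : Finset (Fin 3 → ℤ)) : Set (Fin 3 → ℝ) :=
  convexHull ℝ ((fun v : Fin 3 → ℤ => fun i => (v i : ℝ)) '' (V : Set (Fin 3 → ℤ)))

/-- `Δ_P(a₀·x + a₁·y + a₂·z) = w_a(P)`, the lattice width of `P ⊆ ℝ³` in direction
`a ∈ ℤ³`: the sup minus the inf of the linear form `p ↦ a·p` over `P`. -/
noncomputable def width3 (P : Set (Fin 3 → ℝ)) (a : Fin 3 → ℤ) : ℝ :=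
  sSup ((fun p => ∑ i, (a i : ℝ) * p i) '' P) - sInf ((fun p => ∑ i, (a i : ℝ) * p i) '' P)

/-- `T(P) ⊆ [0,l]³` for some affine unimodular transformation `T : p ↦ A·p + v`. -/
def FitsInCube3 (P : Set (Fin 3 → ℝ)) (l : ℤ) : Prop :=
  ∃ (A : Matrix (Fin 3) (Fin 3) ℤ) (v : Fin 3 → ℤ),
    (A.det = 1 ∨ A.det = -1) ∧
    ∀ p ∈ P, ∀ i, ((A.map (fun z : ℤ => (z : ℝ))).mulVec p + fun j => (v j : ℝ)) i ∈
      Set.Icc (0 : ℝ) (l : ℝ)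

/-- The set of lattice widths of `P` in all primitive directions `a ∈ ℤ³`. -/
def widthSet3 (P : Set (Fin 3 → ℝ)) : Set ℝ :=
  {w | ∃ a : Fin 3 → ℤ, Int.gcd (a 0) (Int.gcd (a 1) (a 2)) = 1 ∧ width3 P a = w}

/-- Membership in the set `S` of Definition 3.5 (for parameters `l₁ ≤ l₂ ≤ l`):
`(a,b) ∈ S` iff (1) `|a| ≥ |b|` implies `|b| ≤ (2l−1)/l₂` and `|a| ≤ (2l−1+|b|·l₂)/l₁`,
and (2) `|b| ≥ |a|` implies `|a| ≤ (2l−1)/l₁` and `|b| ≤ (2l−1+|a|·l₁)/l₂`. -/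
def MemS (l₁ l₂ l a b : ℤ) : Prop :=
  (|b| ≤ |a| → ((|b| : ℝ) ≤ (2 * (l : ℝ) - 1) / (l₂ : ℝ) ∧
    (|a| : ℝ) ≤ (2 * (l : ℝ) - 1 + (|b| : ℝ) * (l₂ : ℝ)) / (l₁ : ℝ))) ∧
  (|a| ≤ |b| → ((|a| : ℝ) ≤ (2 * (l : ℝ) - 1) / (l₁ : ℝ) ∧
    (|b| : ℝ) ≤ (2 * (l : ℝ) - 1 + (|a| : ℝ) * (l₁ : ℝ)) / (l₂ : ℝ)))

/-!
Choose the sign `ε = ±1` for which `|b - ε a| = ||a| - |b||`, and two points `p, q ∈ V`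
realising the width `W ≥ l₂` of `P` in the direction `x + ε y`. For `u = p - q` one has
`|u₀| ≤ l₁`, `|u₁| ≤ l₂`, `|u₂| ≤ l` and `|a u₀ + b u₁ + u₂| ≤ l - 1`, so `|a u₀ + b u₁| ≤ 2l - 1`.
Writing `a u₀ + b u₁ = a W + (b - ε a) u₁ = ε b W + (a - ε b) u₀` and comparing absolute values
gives `|b| l₂ ≤ 2l - 1` when `|b| ≤ |a|`, and `|a| l₁ ≤ 2l - 1` when `|a| ≤ |b|`.
-/

open Matrix

section ConvexHull

variable {𝕜 E : Type*} [Field 𝕜] [LinearOrder 𝕜] [IsStrictOrderedRing 𝕜]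
  [AddCommGroup E] [Module 𝕜 E] (f : E →ₗ[𝕜] 𝕜) {S : Set E}

theorem LinearMap.exists_isGreatest_image_convexHull (hS : S.Finite) (hne : S.Nonempty) :
    ∃ s ∈ S, IsGreatest (f '' convexHull 𝕜 S) (f s) := by
  obtain ⟨s, hs, hmax⟩ := S.exists_max_image f hS hne
  refine ⟨s, hs, Set.mem_image_of_mem f (subset_convexHull 𝕜 S hs), ?_⟩
  rintro _ ⟨x, hx, rfl⟩
  obtain ⟨y, hy, hxy⟩ :=
    (f.convexOn convex_univ).exists_ge_of_mem_convexHull (Set.subset_univ S) hx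
  exact hxy.trans (hmax y hy)

theorem LinearMap.exists_isLeast_image_convexHull (hS : S.Finite) (hne : S.Nonempty) :
    ∃ s ∈ S, IsLeast (f '' convexHull 𝕜 S) (f s) := by
  obtain ⟨s, hs, hmin⟩ := S.exists_min_image f hS hne
  refine ⟨s, hs, Set.mem_image_of_mem f (subset_convexHull 𝕜 S hs), ?_⟩
  rintro _ ⟨x, hx, rfl⟩
  obtain ⟨y, hy, hxy⟩ :=
    (f.concaveOn convex_univ).exists_le_of_mem_convexHull (Set.subset_univ S) hx
  exact (hmin y hy).trans hxy

end ConvexHull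

section LatticeWidth

variable {V : Finset (Fin 3 → ℤ)}

theorem width3_latticePoly3_eq (hV : V.Nonempty) (a : Fin 3 → ℤ) :
    ∃ p ∈ V, ∃ q ∈ V, width3 (latticePoly3 V) a = ((a ⬝ᵥ (p - q) : ℤ) : ℝ) ∧
      ∀ p' ∈ V, ∀ q' ∈ V, a ⬝ᵥ (p' - q') ≤ a ⬝ᵥ (p - q) := by
  set ι : (Fin 3 → ℤ) → Fin 3 → ℝ := fun v i => (v i : ℝ)
  set f := dotProductBilin ℝ ℝ (ι a)
  have hf : ∀ v, f (ι v) = ((a ⬝ᵥ v : ℤ) : ℝ) := fun v => by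
    simp [f, ι, dotProduct]
  have hS : (ι '' (V : Set (Fin 3 → ℤ))).Finite := V.finite_toSet.image ι
  have hne : (ι '' (V : Set (Fin 3 → ℤ))).Nonempty := hV.to_set.image ι
  obtain ⟨_, ⟨p, hp, rfl⟩, hmax⟩ := f.exists_isGreatest_image_convexHull hS hne
  obtain ⟨_, ⟨q, hq, rfl⟩, hmin⟩ := f.exists_isLeast_image_convexHull hS hne
  refine ⟨p, hp, q, hq, ?_, fun p' hp' q' hq' => ?_⟩
  · change sSup (f '' latticePoly3 V) - sInf (f '' latticePoly3 V) = _
    rw [latticePoly3, hmax.csSup_eq, hmin.csInf_eq, hf, hf, dotProduct_sub]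
    push_cast; ring
  · have h₁ := hmax.2 (Set.mem_image_of_mem f (subset_convexHull ℝ _ ⟨p', hp', rfl⟩))
    have h₂ := hmin.2 (Set.mem_image_of_mem f (subset_convexHull ℝ _ ⟨q', hq', rfl⟩))
    rw [hf, hf] at h₁ h₂
    rw [dotProduct_sub, dotProduct_sub]
    exact_mod_cast sub_le_sub h₁ h₂

theorem abs_dotProduct_sub_le_width3 (a : Fin 3 → ℤ) {p q : Fin 3 → ℤ} (hp : p ∈ V) (hq : q ∈ V) :
    ((|a ⬝ᵥ (p - q)| : ℤ) : ℝ) ≤ width3 (latticePoly3 V) a := by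
  obtain ⟨p₀, -, q₀, -, hw, hmax⟩ := width3_latticePoly3_eq ⟨p, hp⟩ a
  rw [hw, Int.cast_le, abs_le]
  have := hmax q hq p hp
  rw [← neg_sub p q, dotProduct_neg] at this
  exact ⟨by linarith, hmax p hp q hq⟩

end LatticeWidth

theorem exists_abs_eq_one_abs_sub_mul (a b : ℤ) :
    ∃ ε : ℤ, |ε| = 1 ∧ |b - a * ε| = |(|a| - |b|)| ∧ |a - b * ε| = |(|a| - |b|)| := by
  rcases le_total 0 a with ha | ha <;> rcases le_total 0 b with hb | hb
  · refine ⟨1, ?_⟩; simp only [abs_of_nonneg ha, abs_of_nonneg hb]; grind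
  · refine ⟨-1, ?_⟩; simp only [abs_of_nonneg ha, abs_of_nonpos hb]; grind
  · refine ⟨-1, ?_⟩; simp only [abs_of_nonpos ha, abs_of_nonneg hb]; grind
  · refine ⟨1, ?_⟩; simp only [abs_of_nonpos ha, abs_of_nonpos hb]; grind

theorem abs_mul_le_of_abs_sub_mul_eq {x y ε u v L M : ℤ}
    (hxy : |y - x * ε| = |x| - |y|) (hL : L ≤ |u + ε * v|) (hv : |v| ≤ L)
    (hM : |x * u + y * v| ≤ M) : |y| * L ≤ M := by
  have hxy_nonneg : 0 ≤ |x| - |y| := hxy ▸ abs_nonneg _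
  have hsplit : x * (u + ε * v) = (x * u + y * v) - (y - x * ε) * v := by ring
  calc |y| * L = |x| * L - (|x| - |y|) * L := by ring
    _ ≤ |x| * |u + ε * v| - (|x| - |y|) * |v| := by gcongr
    _ = |(x * u + y * v) - (y - x * ε) * v| - |(y - x * ε) * v| := by
      rw [← hsplit, abs_mul, abs_mul, hxy]
    _ ≤ |x * u + y * v| := by linarith [abs_sub (x * u + y * v) ((y - x * ε) * v)]
    _ ≤ M := hM

theorem strong_bound_int {l₁ l₂ l a b ε u₀ u₁ u₂ : ℤ} (h12 : l₁ ≤ l₂) (hε : |ε| = 1)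
    (hba : |b - a * ε| = |(|a| - |b|)|) (hab : |a - b * ε| = |(|a| - |b|)|)
    (hu₀ : |u₀| ≤ l₁) (hu₁ : |u₁| ≤ l₂) (hu₂ : |u₂| ≤ l) (hs : l₂ ≤ |u₀ + ε * u₁|)
    (hlt : |a * u₀ + b * u₁ + u₂| < l) :
    (|b| ≤ |a| → |b| * l₂ ≤ 2 * l - 1) ∧ (|a| ≤ |b| → |a| * l₁ ≤ 2 * l - 1) := by
  have hM : |a * u₀ + b * u₁| ≤ 2 * l - 1 := by
    have := abs_sub (a * u₀ + b * u₁ + u₂) u₂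
    rw [add_sub_cancel_right] at this
    omega
  have hs' : l₂ ≤ |u₁ + ε * u₀| := by
    have hε2 : ε * ε = 1 := by rw [← abs_mul_abs_self, hε, one_mul]
    rwa [show u₁ + ε * u₀ = ε * (u₀ + ε * u₁) by linear_combination -u₁ * hε2, abs_mul, hε,
      one_mul]
  refine ⟨fun h => ?_, fun h => ?_⟩
  · exact abs_mul_le_of_abs_sub_mul_eq (by rw [hba, abs_of_nonneg (sub_nonneg.2 h)]) hs hu₁ hM
  · exact abs_mul_le_of_abs_sub_mul_eq
      (by rw [hab, abs_sub_comm |a|, abs_of_nonneg (sub_nonneg.2 h)]) (h12.trans hs') hu₀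
      (by rwa [add_comm])

theorem strong_bound_general (V : Finset (Fin 3 → ℤ)) (hV : V.Nonempty)
    (P : Set (Fin 3 → ℝ)) (hP : P = latticePoly3 V) (l₁ l₂ l : ℤ)
    (h0 : 0 < l₁) (h12 : l₁ ≤ l₂)
    (hx : width3 P ![1, 0, 0] = (l₁ : ℝ)) (hy : width3 P ![0, 1, 0] = (l₂ : ℝ))
    (hz : width3 P ![0, 0, 1] = (l : ℝ))
    (hp : (l₂ : ℝ) ≤ width3 P ![1, 1, 0]) (hm : (l₂ : ℝ) ≤ width3 P ![1, -1, 0])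
    (a b : ℤ) (hab : width3 P ![a, b, 1] < (l : ℝ)) :
    (|b| ≤ |a| → (|b| : ℝ) ≤ (2 * (l : ℝ) - 1) / (l₂ : ℝ)) ∧
    (|a| ≤ |b| → (|a| : ℝ) ≤ (2 * (l : ℝ) - 1) / (l₁ : ℝ)) := by
  subst hP
  obtain ⟨ε, hε, hba, hab'⟩ := exists_abs_eq_one_abs_sub_mul a b
  obtain ⟨p, hpV, q, hqV, hW, -⟩ := width3_latticePoly3_eq hV ![1, ε, 0]
  set u := p - q
  have hwidth (c₀ c₁ c₂ : ℤ) :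
      ((|c₀ * u 0 + c₁ * u 1 + c₂ * u 2| : ℤ) : ℝ) ≤ width3 (latticePoly3 V) ![c₀, c₁, c₂] :=
    vec3_dotProduct ![c₀, c₁, c₂] u ▸ abs_dotProduct_sub_le_width3 _ hpV hqV
  have hu₀ : |u 0| ≤ l₁ := by simpa using (Int.cast_le.mp ((hwidth 1 0 0).trans_eq hx) :)
  have hu₁ : |u 1| ≤ l₂ := by simpa using (Int.cast_le.mp ((hwidth 0 1 0).trans_eq hy) :)
  have hu₂ : |u 2| ≤ l := by simpa using (Int.cast_le.mp ((hwidth 0 0 1).trans_eq hz) :)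
  have hlt : |a * u 0 + b * u 1 + u 2| < l := by
    simpa using Int.cast_lt.mp ((hwidth a b 1).trans_lt hab)
  have hs : l₂ ≤ |u 0 + ε * u 1| := by
    have hl₂ : (l₂ : ℝ) ≤ width3 (latticePoly3 V) ![1, ε, 0] := by
      rcases (abs_eq zero_le_one).mp hε with rfl | rfl
      exacts [hp, hm]
    rw [hW, Int.cast_le, vec3_dotProduct] at hl₂
    simpa using hl₂.trans (le_abs_self _)
  obtain ⟨hb, ha⟩ := strong_bound_int h12 hε hba hab' hu₀ hu₁ hu₂ hs hlt
  have hl₂ : (0 : ℝ) < l₂ := by exact_mod_cast h0.trans_le h12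
  have hl₁ : (0 : ℝ) < l₁ := by exact_mod_cast h0
  refine ⟨fun h => ?_, fun h => ?_⟩
  · rw [le_div_iff₀ hl₂]; exact_mod_cast hb h
  · rw [le_div_iff₀ hl₁]; exact_mod_cast ha h

/-- Lemma (strong bound): with `Δ_P(x) = l₁ ≤ Δ_P(y) = l₂ ≤ Δ_P(z) = l` and
`Δ_P(x±y) ≥ l₂`, if `Δ_P(ax + by + z) < l` then: (1) if `|a| ≥ |b|` then
`|b| ≤ (2l−1)/l₂`; (2) if `|b| ≥ |a|` then `|a| ≤ (2l−1)/l₁`. -/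
theorem strong_bound (V : Finset (Fin 3 → ℤ)) (hV : V.Nonempty)
    (P : Set (Fin 3 → ℝ)) (hP : P = latticePoly3 V) (l₁ l₂ l : ℤ)
    (h0 : 0 < l₁) (h12 : l₁ ≤ l₂) (h2l : l₂ ≤ l)
    (hx : width3 P ![1, 0, 0] = (l₁ : ℝ)) (hy : width3 P ![0, 1, 0] = (l₂ : ℝ))
    (hz : width3 P ![0, 0, 1] = (l : ℝ))
    (hp : (l₂ : ℝ) ≤ width3 P ![1, 1, 0]) (hm : (l₂ : ℝ) ≤ width3 P ![1, -1, 0])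
    (a b : ℤ) (hab : width3 P ![a, b, 1] < (l : ℝ)) :
    (|b| ≤ |a| → (|b| : ℝ) ≤ (2 * (l : ℝ) - 1) / (l₂ : ℝ)) ∧
    (|a| ≤ |b| → (|a| : ℝ) ≤ (2 * (l : ℝ) - 1) / (l₁ : ℝ)) :=
  strong_bound_general V hV P hP l₁ l₂ l h0 h12 hx hy hz hp hm a b hab
end

section
/- Let l₁ ≤ l₂ ≤ l be positive integers and let S ⊂ ℤ² be the set of pairs (a,b) such that both implications hold: if |a| ≥ |b| then |b| ≤ (2l−1)/l₂ and |a| ≤ (2l−1+|b|·l₂)/l₁; and if |b| ≥ |a| then |a| ≤ (2l−1)/l₁ and |b| ≤ (2l−1+|a|·l₁)/l₂. Then S is finite and its cardinality is at most 64·l²/(l₁·l₂). -/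
/-!
Write `n = 2l - 1`. A point `(a, b)` of `S` with `|b| ≤ |a|` has `|b|·l₂ ≤ n` and
`|a|·l₁ ≤ n + |b|·l₂ ≤ 2n`, and even `|a|·l₁ ≤ n` when `b = 0`; symmetrically when `|a| ≤ |b|`.
So `S` lies in the box `[-a, a] × [-b, b]`, `a = ⌊n/l₁⌋`, `b = ⌊n/l₂⌋`, together with the
off-axis points of the arms `[-A, A] × [-b, b]` and `[-a, a] × [-B, B]`, `A = ⌊2n/l₁⌋`,
`B = ⌊2n/l₂⌋`. Since `2a ≤ A` and `2b ≤ B`, this cross has at most `4AB` points once `A ≥ 3`,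
which holds for `l ≥ 2`, and `4AB·l₁l₂ ≤ 4(2n)² ≤ 64l²`; for `l = 1` it has `17` points.
Dropping the axis points from the arms matters: the full arms have more than `64l²/(l₁l₂)`
points for `l₁ = l₂ = l - 1` and `l` large.
-/

open Finset

theorem memS_iff_mul_le {l₁ l₂ l a b : ℤ} (hl₁ : 0 < l₁) (hl₂ : 0 < l₂) :
    MemS l₁ l₂ l a b ↔
      (|b| ≤ |a| → |b| * l₂ ≤ 2 * l - 1 ∧ |a| * l₁ ≤ 2 * l - 1 + |b| * l₂) ∧
      (|a| ≤ |b| → |a| * l₁ ≤ 2 * l - 1 ∧ |b| * l₂ ≤ 2 * l - 1 + |a| * l₁) := by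
  have hl₁' : (0 : ℝ) < l₁ := by exact_mod_cast hl₁
  have hl₂' : (0 : ℝ) < l₂ := by exact_mod_cast hl₂
  simp only [MemS, le_div_iff₀ hl₁', le_div_iff₀ hl₂']
  norm_cast

noncomputable def crossSet (a A b B : ℤ) : Finset (ℤ × ℤ) :=
  Icc (-a) a ×ˢ Icc (-b) b ∪ (Icc (-A) A \ Icc (-a) a) ×ˢ (Icc (-b) b \ {0}) ∪
    (Icc (-a) a \ {0}) ×ˢ (Icc (-B) B \ Icc (-b) b)

def crossCount (a A b B : ℤ) : ℤ :=
  (2 * a + 1) * (2 * b + 1) + 2 * (A - a) * (2 * b) + 2 * a * (2 * (B - b))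

theorem mem_Icc_neg_iff_abs_le {x n : ℤ} : x ∈ Icc (-n) n ↔ |x| ≤ n := by
  rw [mem_Icc, abs_le]

theorem mem_crossSet_of_memS {l₁ l₂ l x y : ℤ} (hl₁ : 0 < l₁) (hl₂ : 0 < l₂)
    (h : MemS l₁ l₂ l x y) :
    (x, y) ∈
      crossSet ((2 * l - 1) / l₁) ((4 * l - 2) / l₁) ((2 * l - 1) / l₂) ((4 * l - 2) / l₂) := by
  rw [memS_iff_mul_le hl₁ hl₂] at h
  have hx : x = 0 → |x| * l₁ = 0 := by rintro rfl; simp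
  have hy : y = 0 → |y| * l₂ = 0 := by rintro rfl; simp
  simp only [crossSet, mem_union, mem_product, mem_sdiff, mem_singleton, mem_Icc_neg_iff_abs_le,
    Int.le_ediv_iff_mul_le hl₁, Int.le_ediv_iff_mul_le hl₂]
  omega

theorem card_Icc_neg {n : ℤ} (hn : 0 ≤ n) : (#(Icc (-n) n) : ℤ) = 2 * n + 1 := by
  rw [Int.card_Icc]; omega

theorem card_Icc_neg_sdiff_Icc_neg {m n : ℤ} (hm : 0 ≤ m) (hmn : m ≤ n) :
    (#(Icc (-n) n \ Icc (-m) m) : ℤ) = 2 * (n - m) := by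
  have hsub : Icc (-m) m ⊆ Icc (-n) n := Icc_subset_Icc (by omega) hmn
  rw [card_sdiff_of_subset hsub, Nat.cast_sub (card_le_card hsub), card_Icc_neg (hm.trans hmn),
    card_Icc_neg hm]
  ring

theorem card_Icc_neg_sdiff_zero {n : ℤ} (hn : 0 ≤ n) : (#(Icc (-n) n \ {0}) : ℤ) = 2 * n := by
  simpa using card_Icc_neg_sdiff_Icc_neg le_rfl hn

theorem card_crossSet_le {a A b B : ℤ} (ha : 0 ≤ a) (haA : a ≤ A) (hb : 0 ≤ b) (hbB : b ≤ B) :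
    (#(crossSet a A b B) : ℤ) ≤ crossCount a A b B := by
  calc (#(crossSet a A b B) : ℤ)
      ≤ #(Icc (-a) a ×ˢ Icc (-b) b) + #((Icc (-A) A \ Icc (-a) a) ×ˢ (Icc (-b) b \ {0})) +
          #((Icc (-a) a \ {0}) ×ˢ (Icc (-B) B \ Icc (-b) b)) := by
        exact_mod_cast (card_union_le _ _).trans (Nat.add_le_add_right (card_union_le _ _) _)
    _ = crossCount a A b B := by
      simp only [card_product, Nat.cast_mul, card_Icc_neg ha, card_Icc_neg hb,
        card_Icc_neg_sdiff_Icc_neg ha haA, card_Icc_neg_sdiff_Icc_neg hb hbB,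
        card_Icc_neg_sdiff_zero ha, card_Icc_neg_sdiff_zero hb, crossCount]

theorem crossCount_le_four_mul {a A b B : ℤ} (ha : 2 * a ≤ A) (hb : 2 * b ≤ B) (hA : 3 ≤ A)
    (hB : 1 ≤ B) : crossCount a A b B ≤ 4 * A * B := by
  have hAa : 3 ≤ 2 * (A - a) - 1 := by omega
  have hBb : 1 ≤ 2 * (B - b) - 1 := by omega
  have := mul_le_mul hAa hBb zero_le_one (by omega)
  unfold crossCount
  linarith

theorem crossCount_mul_le {l₁ l₂ l : ℤ} (hl₁ : 0 < l₁) (h1l : l₁ ≤ l) (hl₂ : 0 < l₂)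
    (h2l : l₂ ≤ l) :
    crossCount ((2 * l - 1) / l₁) ((4 * l - 2) / l₁) ((2 * l - 1) / l₂) ((4 * l - 2) / l₂) *
      (l₁ * l₂) ≤ 64 * l ^ 2 := by
  obtain rfl | hl := eq_or_lt_of_le (show 1 ≤ l by omega)
  · obtain rfl : l₁ = 1 := by omega
    obtain rfl : l₂ = 1 := by omega
    norm_num [crossCount]
  set A := (4 * l - 2) / l₁
  set B := (4 * l - 2) / l₂
  have hA : 3 ≤ A := (Int.le_ediv_iff_mul_le hl₁).2 (by linarith)
  have hB : 1 ≤ B := (Int.le_ediv_iff_mul_le hl₂).2 (by linarith)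
  have ha : 2 * ((2 * l - 1) / l₁) ≤ A :=
    (Int.le_ediv_iff_mul_le hl₁).2 (by linarith [Int.ediv_mul_le (2 * l - 1) hl₁.ne'])
  have hb : 2 * ((2 * l - 1) / l₂) ≤ B :=
    (Int.le_ediv_iff_mul_le hl₂).2 (by linarith [Int.ediv_mul_le (2 * l - 1) hl₂.ne'])
  have hAl : A * l₁ ≤ 4 * l - 2 := Int.ediv_mul_le _ hl₁.ne'
  have hBl : B * l₂ ≤ 4 * l - 2 := Int.ediv_mul_le _ hl₂.ne'
  calc _ ≤ 4 * A * B * (l₁ * l₂) :=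
        mul_le_mul_of_nonneg_right (crossCount_le_four_mul ha hb hA hB) (by positivity)
    _ = 4 * ((A * l₁) * (B * l₂)) := by ring
    _ ≤ 4 * ((4 * l - 2) * (4 * l - 2)) := by gcongr; omega
    _ ≤ 64 * l ^ 2 := by nlinarith

theorem card_crossSet_mul_le {l₁ l₂ l : ℤ} (hl₁ : 0 < l₁) (h1l : l₁ ≤ l) (hl₂ : 0 < l₂)
    (h2l : l₂ ≤ l) :
    (#(crossSet ((2 * l - 1) / l₁) ((4 * l - 2) / l₁) ((2 * l - 1) / l₂) ((4 * l - 2) / l₂)) : ℤ) *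
      (l₁ * l₂) ≤ 64 * l ^ 2 := by
  have inner_le_outer {d : ℤ} (hd : 0 < d) : (2 * l - 1) / d ≤ (4 * l - 2) / d :=
    Int.ediv_le_ediv hd (by omega)
  have inner_nonneg {d : ℤ} (hd : 0 < d) : 0 ≤ (2 * l - 1) / d := Int.ediv_nonneg (by omega) hd.le
  refine (mul_le_mul_of_nonneg_right ?_ (by positivity)).trans (crossCount_mul_le hl₁ h1l hl₂ h2l)
  exact card_crossSet_le (inner_nonneg hl₁) (inner_le_outer hl₁) (inner_nonneg hl₂)
    (inner_le_outer hl₂)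

/-- Proposition: the set `S` is finite and its cardinality is at most `64·l²/(l₁·l₂)`. -/
theorem S_finite_card_le (l₁ l₂ l : ℤ) (h0 : 0 < l₁) (h12 : l₁ ≤ l₂) (h2l : l₂ ≤ l) :
    {p : ℤ × ℤ | MemS l₁ l₂ l p.1 p.2}.Finite ∧
    (({p : ℤ × ℤ | MemS l₁ l₂ l p.1 p.2}.ncard : ℝ) ≤
      64 * (l : ℝ) ^ 2 / ((l₁ : ℝ) * (l₂ : ℝ))) := by
  have hl₂ : 0 < l₂ := h0.trans_le h12
  set T := crossSet ((2 * l - 1) / l₁) ((4 * l - 2) / l₁) ((2 * l - 1) / l₂) ((4 * l - 2) / l₂)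
  have hST : {p : ℤ × ℤ | MemS l₁ l₂ l p.1 p.2} ⊆ T := fun p hp => mem_crossSet_of_memS h0 hl₂ hp
  have hcard : {p : ℤ × ℤ | MemS l₁ l₂ l p.1 p.2}.ncard ≤ #T :=
    (Set.ncard_le_ncard hST T.finite_toSet).trans_eq (Set.ncard_coe_finset T)
  refine ⟨T.finite_toSet.subset hST, ?_⟩
  rw [le_div_iff₀ (by positivity)]
  have hT : (#T : ℤ) * (l₁ * l₂) ≤ 64 * l ^ 2 := card_crossSet_mul_le h0 (h12.trans h2l) hl₂ h2l
  calc _ ≤ (#T : ℝ) * (l₁ * l₂) := by gcongr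
    _ ≤ 64 * (l : ℝ) ^ 2 := by exact_mod_cast hT
end

section
/- Let P ⊂ ℝ³ be a lattice polytope with Δ_P(x) = l₁ ≤ Δ_P(y) = l₂ ≤ Δ_P(z) = l. Suppose Δ_P(x+y) ≥ l₂ and Δ_P(x−y) ≥ l₂, and suppose Δ_P(ax + by + z) ≥ l for all (a,b) ∈ S. Then ls_□(P) = l. -/
open Matrix

def linForm (a : Fin 3 → ℤ) : (Fin 3 → ℝ) →ₗ[ℝ] ℝ where
  toFun p := ∑ i, (a i : ℝ) * p i
  map_add' p q := by simp only [Pi.add_apply, mul_add, Finset.sum_add_distrib]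
  map_smul' c p := by
    simp only [Pi.smul_apply, smul_eq_mul, RingHom.id_apply, Finset.mul_sum, mul_left_comm]

theorem linForm_add (a b : Fin 3 → ℤ) (p : Fin 3 → ℝ) :
    linForm (a + b) p = linForm a p + linForm b p := by
  simp only [linForm, LinearMap.coe_mk, AddHom.coe_mk, Pi.add_apply, Int.cast_add, add_mul,
    Finset.sum_add_distrib]

theorem linForm_smul (c : ℤ) (a : Fin 3 → ℤ) (p : Fin 3 → ℝ) :
    linForm (c • a) p = c * linForm a p := by
  simp only [linForm, LinearMap.coe_mk, AddHom.coe_mk, Pi.smul_apply, smul_eq_mul, Int.cast_mul,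
    Finset.mul_sum, mul_assoc]

theorem width3_eq_sSup_sub_sInf (P : Set (Fin 3 → ℝ)) (a : Fin 3 → ℤ) :
    width3 P a = sSup (linForm a '' P) - sInf (linForm a '' P) := rfl

section CompactWidth

variable {P : Set (Fin 3 → ℝ)}

theorem sub_le_width3 (hP : IsCompact P) (a : Fin 3 → ℤ) {p q : Fin 3 → ℝ} (hp : p ∈ P)
    (hq : q ∈ P) : linForm a p - linForm a q ≤ width3 P a := by
  have hc := hP.image (linForm a).continuous_of_finiteDimensional
  exact sub_le_sub (le_csSup hc.bddAbove ⟨p, hp, rfl⟩) (csInf_le hc.bddBelow ⟨q, hq, rfl⟩)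

theorem abs_sub_le_width3 (hP : IsCompact P) (a : Fin 3 → ℤ) {p q : Fin 3 → ℝ} (hp : p ∈ P)
    (hq : q ∈ P) : |linForm a p - linForm a q| ≤ width3 P a :=
  abs_sub_le_iff.mpr ⟨sub_le_width3 hP a hp hq, sub_le_width3 hP a hq hp⟩

theorem exists_width3_eq_sub (hP : IsCompact P) (hne : P.Nonempty) (a : Fin 3 → ℤ) :
    ∃ p ∈ P, ∃ q ∈ P, width3 P a = linForm a p - linForm a q := by
  have hc := hP.image (linForm a).continuous_of_finiteDimensional
  obtain ⟨p, hp, hpeq⟩ := hc.sSup_mem (hne.image _)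
  obtain ⟨q, hq, hqeq⟩ := hc.sInf_mem (hne.image _)
  exact ⟨p, hp, q, hq, by rw [width3_eq_sSup_sub_sInf, ← hpeq, ← hqeq]⟩

noncomputable def widthSeminorm (hP : IsCompact P) (hne : P.Nonempty) :
    Seminorm ℤ (Fin 3 → ℤ) :=
  Seminorm.of (width3 P)
    (fun a b => by
      obtain ⟨p, hp, q, hq, h⟩ := exists_width3_eq_sub hP hne (a + b)
      rw [h, linForm_add, linForm_add]
      linarith [sub_le_width3 hP a hp hq, sub_le_width3 hP b hp hq])
    (fun c a => by
      rw [Int.norm_eq_abs]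
      apply le_antisymm
      · obtain ⟨p, hp, q, hq, h⟩ := exists_width3_eq_sub hP hne (c • a)
        rw [h, linForm_smul, linForm_smul, ← mul_sub]
        calc (c : ℝ) * (linForm a p - linForm a q) ≤ |(c : ℝ)| * |linForm a p - linForm a q| :=
              (le_abs_self _).trans_eq (abs_mul _ _)
          _ ≤ |(c : ℝ)| * width3 P a :=
              mul_le_mul_of_nonneg_left (abs_sub_le_width3 hP a hp hq) (abs_nonneg _)
      · obtain ⟨p, hp, q, hq, h⟩ := exists_width3_eq_sub hP hne a
        have hnonneg : 0 ≤ width3 P a := by simpa using sub_le_width3 hP a hp hp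
        calc |(c : ℝ)| * width3 P a = |linForm (c • a) p - linForm (c • a) q| := by
              rw [linForm_smul, linForm_smul, ← mul_sub, abs_mul, ← h, abs_of_nonneg hnonneg]
          _ ≤ width3 P (c • a) := abs_sub_le_width3 hP _ hp hq)

@[simp]
theorem widthSeminorm_apply (hP : IsCompact P) (hne : P.Nonempty) (a : Fin 3 → ℤ) :
    widthSeminorm hP hne a = width3 P a := rfl

end CompactWidth

theorem isCompact_latticePoly3 (V : Finset (Fin 3 → ℤ)) : IsCompact (latticePoly3 V) :=
  (V.finite_toSet.image _).isCompact_convexHull ℝ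

theorem latticePoly3_nonempty {V : Finset (Fin 3 → ℤ)} (hV : V.Nonempty) :
    (latticePoly3 V).Nonempty :=
  (hV.to_set.image _).convexHull

theorem exists_vertex_linForm_le {V : Finset (Fin 3 → ℤ)} (hV : V.Nonempty) (a : Fin 3 → ℤ) :
    ∃ w ∈ V, ∀ p ∈ latticePoly3 V, linForm a (fun i => (w i : ℝ)) ≤ linForm a p := by
  obtain ⟨w, hw, hmin⟩ := V.exists_min_image (fun v => linForm a (fun i => (v i : ℝ))) hV
  refine ⟨w, hw, fun p hp => ?_⟩
  obtain ⟨_, ⟨v, hv, rfl⟩, hvp⟩ :=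
    ((linForm a).concaveOn convex_univ).exists_le_of_mem_convexHull (Set.subset_univ _) hp
  exact (hmin v hv).trans hvp

theorem fitsInCube3_latticePoly3 {V : Finset (Fin 3 → ℤ)} (hV : V.Nonempty) {l : ℤ}
    (hl : ∀ i, width3 (latticePoly3 V) (Pi.single i 1) ≤ l) : FitsInCube3 (latticePoly3 V) l := by
  choose w hwV hw using fun i => exists_vertex_linForm_le hV (Pi.single i 1)
  have hcoord (i : Fin 3) (p : Fin 3 → ℝ) : linForm (Pi.single i 1) p = p i := by
    simp [linForm, Pi.single_apply]
  refine ⟨1, fun i => -w i i, Or.inl det_one, fun p hp i => ?_⟩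
  have hlow := hw i p hp
  have hup := (sub_le_width3 (isCompact_latticePoly3 V) _ hp
    (subset_convexHull ℝ _ ⟨w i, hwV i, rfl⟩)).trans (hl i)
  rw [hcoord, hcoord] at hlow hup
  simp only [Matrix.map_one _ Int.cast_zero Int.cast_one, one_mulVec, Pi.add_apply, Int.cast_neg]
  constructor <;> linarith

theorem width3_row_le {P : Set (Fin 3 → ℝ)} (hP : IsCompact P) (hne : P.Nonempty)
    {A : Matrix (Fin 3) (Fin 3) ℤ} {v : Fin 3 → ℤ} {k : ℤ}
    (hT : ∀ p ∈ P, ∀ i, ((A.map (fun z : ℤ => (z : ℝ))).mulVec p + fun j => (v j : ℝ)) i ∈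
      Set.Icc (0 : ℝ) (k : ℝ)) (i : Fin 3) :
    width3 P (A i) ≤ k := by
  obtain ⟨p, hp, q, hq, h⟩ := exists_width3_eq_sub hP hne (A i)
  have hpk := (hT p hp i).2
  have hq0 := (hT q hq i).1
  change linForm (A i) p + v i ≤ k at hpk
  change 0 ≤ linForm (A i) q + v i at hq0
  linarith

theorem Matrix.exists_odd_of_odd_det {n : Type*} [Fintype n] [DecidableEq n]
    {A : Matrix n n ℤ} (hA : Odd A.det) (j : n) : ∃ i, Odd (A i j) := by
  by_contra! hev
  choose b hb using fun i => (Int.not_odd_iff_even.mp (hev i)).two_dvd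
  have hcol : A = A.updateCol j ((2 : ℤ) • b) := by
    conv_lhs => rw [← A.updateCol_eq_self j]
    congr 1
    ext i
    simp [hb i]
  rw [hcol, det_updateCol_smul] at hA
  exact Int.not_even_iff_odd.mpr hA (even_two_mul _)

theorem Int.two_mul_abs_bmod_le {m : ℕ} (hm : Odd m) (a : ℤ) : 2 * |a.bmod m| ≤ m - 1 := by
  obtain ⟨k, rfl⟩ := hm
  have hlo := Int.le_bmod (x := a) (m := 2 * k + 1) (by omega)
  have hhi := Int.bmod_le (x := a) (m := 2 * k + 1) (by omega)
  push_cast at hlo hhi ⊢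
  have : |a.bmod (2 * k + 1)| ≤ k := abs_le.mpr ⟨by omega, by omega⟩
  omega

/-- Integrality of the parameters turns each strict bound `< 2l + ⋯` into the `≤ 2l - 1 + ⋯`
of `S`. -/
theorem memS_of_lt {l₁ l₂ l a b : ℤ} (h0 : 0 < l₁) (h12 : l₁ ≤ l₂)
    (hb : |b| ≤ |a| → |b| * l₂ < 2 * l) (ha : |a| ≤ |b| → |a| * l₁ < 2 * l)
    (ha' : |a| * l₁ < 2 * l + |b| * l₂) (hb' : |b| * l₂ < 2 * l + |a| * l₁) :
    MemS l₁ l₂ l a b := by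
  have hl₁ : (0 : ℝ) < l₁ := by exact_mod_cast h0
  have hl₂ : (0 : ℝ) < l₂ := by exact_mod_cast h0.trans_le h12
  refine ⟨fun h => ⟨?_, ?_⟩, fun h => ⟨?_, ?_⟩⟩ <;>
    rw [le_div_iff₀ (by assumption)] <;> norm_cast <;> grind

namespace Seminorm

variable {E : Type*} [AddCommGroup E] (p : Seminorm ℤ E)

theorem map_zsmul_eq_abs_mul (c : ℤ) (x : E) : p (c • x) = |(c : ℝ)| * p x := by
  rw [map_smul_eq_mul, Int.norm_eq_abs]

theorem mul_le_map_zsmul_add_zsmul_of_nonneg {e f : E} {L : ℝ} (hef : L ≤ p (e + f))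
    (hf : p f ≤ L) {m n : ℤ} (hn : 0 ≤ n) (hnm : n ≤ m) : n * L ≤ p (m • e + n • f) := by
  have hsplit : m • (e + f) = (m • e + n • f) + (m - n) • f := by module
  have htri := map_add_le_add p (m • e + n • f) ((m - n) • f)
  rw [← hsplit, map_zsmul_eq_abs_mul, map_zsmul_eq_abs_mul,
    abs_of_nonneg (by exact_mod_cast hn.trans hnm), abs_of_nonneg (by simpa using hnm)] at htri
  push_cast at htri
  have hm : (0 : ℝ) ≤ m := by exact_mod_cast hn.trans hnm
  have hmn : (0 : ℝ) ≤ m - n := by simpa using hnm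
  nlinarith [mul_le_mul_of_nonneg_left hef hm, mul_le_mul_of_nonneg_left hf hmn]

theorem abs_mul_le_map_zsmul_add_zsmul {e f : E} {L : ℝ} (hadd : L ≤ p (e + f))
    (hsub : L ≤ p (e - f)) (hf : p f ≤ L) {m n : ℤ} (hnm : |n| ≤ |m|) :
    |(n : ℝ)| * L ≤ p (m • e + n • f) := by
  wlog hm : 0 ≤ m generalizing m n
  · have := this (m := -m) (n := -n) (by simpa using hnm) (by omega)
    rwa [Int.cast_neg, abs_neg, neg_smul, neg_smul, ← neg_add, map_neg_eq_map] at this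
  rw [abs_of_nonneg hm] at hnm
  rcases le_total 0 n with hn | hn
  · rw [abs_of_nonneg (by exact_mod_cast hn)]
    exact p.mul_le_map_zsmul_add_zsmul_of_nonneg hadd hf hn ((le_abs_self n).trans hnm)
  · rw [abs_of_nonpos (by exact_mod_cast hn), ← Int.cast_neg]
    have := p.mul_le_map_zsmul_add_zsmul_of_nonneg (e := e) (f := -f) (L := L)
      (by rwa [← sub_eq_add_neg]) (by rwa [map_neg_eq_map]) (neg_nonneg.mpr hn)
      ((neg_le_abs n).trans hnm)
    rwa [smul_neg, neg_smul, neg_neg] at this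

variable {e₁ e₂ e₃ : E} {l₁ l₂ l : ℤ}

theorem le_map_add_of_forall_memS (h0 : 0 < l₁) (h12 : l₁ ≤ l₂)
    (hx : p e₁ = l₁) (hy : p e₂ = l₂) (hz : p e₃ = l)
    (hp : l₂ ≤ p (e₁ + e₂)) (hm : l₂ ≤ p (e₁ - e₂))
    (hS : ∀ a b : ℤ, MemS l₁ l₂ l a b → (l : ℝ) ≤ p (a • e₁ + b • e₂ + e₃)) (x y : ℤ) :
    (l : ℝ) ≤ p (x • e₁ + y • e₂ + e₃) := by
  by_contra! hlt
  set u := x • e₁ + y • e₂ + e₃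
  have hflat : p (x • e₁ + y • e₂) < 2 * l := by
    have := map_sub_le_add p u e₃
    rw [add_sub_cancel_right, hz] at this
    linarith
  have hx' : |(x : ℝ)| * l₁ < 2 * l + |(y : ℝ)| * l₂ := by
    have h1 := map_sub_le_add p u (y • e₂ + e₃)
    have h2 := map_add_le_add p (y • e₂) e₃
    rw [show u - (y • e₂ + e₃) = x • e₁ by simp only [u]; abel, map_zsmul_eq_abs_mul, hx] at h1
    rw [map_zsmul_eq_abs_mul, hy, hz] at h2
    linarith
  have hy' : |(y : ℝ)| * l₂ < 2 * l + |(x : ℝ)| * l₁ := by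
    have h1 := map_sub_le_add p u (x • e₁ + e₃)
    have h2 := map_add_le_add p (x • e₁) e₃
    rw [show u - (x • e₁ + e₃) = y • e₂ by simp only [u]; abel, map_zsmul_eq_abs_mul, hy] at h1
    rw [map_zsmul_eq_abs_mul, hx, hz] at h2
    linarith
  have hyx (h : |y| ≤ |x|) : |(y : ℝ)| * l₂ < 2 * l :=
    (p.abs_mul_le_map_zsmul_add_zsmul hp hm hy.le h).trans_lt hflat
  have hxy (h : |x| ≤ |y|) : |(x : ℝ)| * l₁ < 2 * l := by
    have h₂₁ := p.abs_mul_le_map_zsmul_add_zsmul (e := e₂) (f := e₁) (add_comm e₁ e₂ ▸ hp)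
      (by rwa [← map_neg_eq_map, neg_sub]) (hx.trans_le (by exact_mod_cast h12)) h
    rw [add_comm] at h₂₁
    have : |(x : ℝ)| * l₁ ≤ |(x : ℝ)| * l₂ :=
      mul_le_mul_of_nonneg_left (by exact_mod_cast h12) (abs_nonneg _)
    linarith
  exact hlt.not_ge <| hS x y <| memS_of_lt h0 h12 (fun h => by exact_mod_cast hyx h)
    (fun h => by exact_mod_cast hxy h) (by exact_mod_cast hx') (by exact_mod_cast hy')

theorem le_map_of_odd (h0 : 0 < l₁) (h12 : l₁ ≤ l₂) (h2l : l₂ ≤ l)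
    (hx : p e₁ = l₁) (hy : p e₂ = l₂) (hz : p e₃ = l)
    (hp : l₂ ≤ p (e₁ + e₂)) (hm : l₂ ≤ p (e₁ - e₂))
    (hS : ∀ a b : ℤ, MemS l₁ l₂ l a b → (l : ℝ) ≤ p (a • e₁ + b • e₂ + e₃)) {a b c : ℤ}
    (hc : Odd c) : (l : ℝ) ≤ p (a • e₁ + b • e₂ + c • e₃) := by
  wlog hc0 : 0 < c generalizing a b c
  · have := this (a := -a) (b := -b) hc.neg (by grind)
    rwa [neg_smul, neg_smul, neg_smul, ← neg_add, ← neg_add, map_neg_eq_map] at this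
  obtain ⟨m, rfl⟩ := Int.eq_ofNat_of_zero_le hc0.le
  have hodd : Odd m := by exact_mod_cast hc
  set r := a.bmod m
  set s := b.bmod m
  have hround : |r| * l₁ + |s| * l₂ ≤ (m - 1) * l := by
    have hr2 : 2 * |r| ≤ m - 1 := Int.two_mul_abs_bmod_le hodd a
    have hs2 : 2 * |s| ≤ m - 1 := Int.two_mul_abs_bmod_le hodd b
    calc |r| * l₁ + |s| * l₂ ≤ (|r| + |s|) * l := by
          nlinarith [abs_nonneg r, abs_nonneg s]
      _ ≤ (m - 1) * l := mul_le_mul_of_nonneg_right (by omega) (by omega)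
  set u := a.bdiv m • e₁ + b.bdiv m • e₂ + e₃
  have hsplit : (m : ℤ) • u = (a • e₁ + b • e₂ + (m : ℤ) • e₃) - (r • e₁ + s • e₂) := by
    conv_rhs => rw [← Int.bdiv_add_bmod a m, ← Int.bdiv_add_bmod b m]
    module
  have htri : (m : ℝ) * p u ≤ p (a • e₁ + b • e₂ + (m : ℤ) • e₃) + (|r| * l₁ + |s| * l₂ : ℤ) := by
    have h1 := map_sub_le_add p (a • e₁ + b • e₂ + (m : ℤ) • e₃) (r • e₁ + s • e₂)
    have h2 := map_add_le_add p (r • e₁) (s • e₂)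
    rw [← hsplit, map_zsmul_eq_abs_mul, Int.cast_natCast, Nat.abs_cast] at h1
    rw [map_zsmul_eq_abs_mul, map_zsmul_eq_abs_mul, hx, hy] at h2
    push_cast
    linarith
  have hu : (m : ℝ) * l ≤ m * p u := mul_le_mul_of_nonneg_left
    (p.le_map_add_of_forall_memS h0 h12 hx hy hz hp hm hS _ _) (Nat.cast_nonneg m)
  have hround' : ((|r| * l₁ + |s| * l₂ : ℤ) : ℝ) ≤ ((m : ℝ) - 1) * l := by exact_mod_cast hround
  linarith

end Seminorm

theorem le_width3_of_odd {P : Set (Fin 3 → ℝ)} (hP : IsCompact P) (hne : P.Nonempty)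
    {l₁ l₂ l : ℤ} (h0 : 0 < l₁) (h12 : l₁ ≤ l₂) (h2l : l₂ ≤ l)
    (hx : width3 P ![1, 0, 0] = (l₁ : ℝ)) (hy : width3 P ![0, 1, 0] = (l₂ : ℝ))
    (hz : width3 P ![0, 0, 1] = (l : ℝ))
    (hp : (l₂ : ℝ) ≤ width3 P ![1, 1, 0]) (hm : (l₂ : ℝ) ≤ width3 P ![1, -1, 0])
    (hS : ∀ a b : ℤ, MemS l₁ l₂ l a b → (l : ℝ) ≤ width3 P ![a, b, 1])
    {u : Fin 3 → ℤ} (hu : Odd (u 2)) : (l : ℝ) ≤ width3 P u := by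
  have hu_eq : u = u 0 • ![1, 0, 0] + u 1 • ![0, 1, 0] + u 2 • ![0, 0, 1] := by
    ext j; fin_cases j <;> simp
  rw [hu_eq, ← widthSeminorm_apply hP hne]
  exact (widthSeminorm hP hne).le_map_of_odd h0 h12 h2l hx hy hz (by simpa using hp)
    (by rwa [show (![1, 0, 0] - ![0, 1, 0] : Fin 3 → ℤ) = ![1, -1, 0] by decide])
    (fun a b hab => by simpa using hS a b hab) hu

/-- Theorem (main 3D result): with `Δ_P(x) = l₁ ≤ Δ_P(y) = l₂ ≤ Δ_P(z) = l`,
`Δ_P(x±y) ≥ l₂`, and `Δ_P(ax + by + z) ≥ l` for all `(a,b) ∈ S`, we have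
`ls_□(P) = l`. -/
theorem latticeSize3_eq (V : Finset (Fin 3 → ℤ)) (hV : V.Nonempty)
    (P : Set (Fin 3 → ℝ)) (hP : P = latticePoly3 V) (l₁ l₂ l : ℤ)
    (h0 : 0 < l₁) (h12 : l₁ ≤ l₂) (h2l : l₂ ≤ l)
    (hx : width3 P ![1, 0, 0] = (l₁ : ℝ)) (hy : width3 P ![0, 1, 0] = (l₂ : ℝ))
    (hz : width3 P ![0, 0, 1] = (l : ℝ))
    (hp : (l₂ : ℝ) ≤ width3 P ![1, 1, 0]) (hm : (l₂ : ℝ) ≤ width3 P ![1, -1, 0])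
    (hS : ∀ a b : ℤ, MemS l₁ l₂ l a b → (l : ℝ) ≤ width3 P ![a, b, 1]) :
    IsLeast {k : ℤ | FitsInCube3 P k} l := by
  subst hP
  have hc := isCompact_latticePoly3 V
  have hne := latticePoly3_nonempty hV
  refine ⟨fitsInCube3_latticePoly3 hV fun i => ?_, ?_⟩
  · have h1 : (l₁ : ℝ) ≤ l := by exact_mod_cast h12.trans h2l
    have h2 : (l₂ : ℝ) ≤ l := by exact_mod_cast h2l
    fin_cases i
    · simpa [show (Pi.single 0 1 : Fin 3 → ℤ) = ![1, 0, 0] by decide, hx] using h1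
    · simpa [show (Pi.single 1 1 : Fin 3 → ℤ) = ![0, 1, 0] by decide, hy] using h2
    · simp [show (Pi.single 2 1 : Fin 3 → ℤ) = ![0, 0, 1] by decide, hz]
  · rintro k ⟨A, v, hdet, hT⟩
    obtain ⟨i, hi⟩ := A.exists_odd_of_odd_det (by rcases hdet with h | h <;> simp [h]) 2
    exact_mod_cast (le_width3_of_odd hc hne h0 h12 h2l hx hy hz hp hm hS hi).trans
      (width3_row_le hc hne hT i)
end
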